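/- Let p be an odd prime, d ≥ 1, l ∈ {0,1,...,d}, and let K, K' be integers with 0 ≤ K ≤ K' and p > 2K' + 1. Let δ > 0, let v ∈ F_p^d, and let X ⊆ v + [-K,K]^l × F_p^{d-l} be a nonempty finite set which is (K',δ)-thick in its affine hull U. Then the projection of U onto the first l coordinates is a single point; that is, each of the first l coordinate functions is constant on U. -/

import Mathlib

/-! The shifted coordinate `x ↦ x i - v i` maps `X` into `[-K, K] ⊆ [-K', K']`, so `X` is not
thick along it; thickness in the affine hull then forces it to be constant on the hull. -/

open Finset

/-- The interval `[-K, K] = {-K, ..., K}` regarded as a subset of `ZMod p`. -/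
noncomputable def interval (p K : ℕ) : Finset (ZMod p) :=
  (Finset.Icc (-(K : ℤ)) (K : ℤ)).image (fun k : ℤ => (k : ZMod p))

/-- The linear function `x ↦ a₀ + ∑ i, a i * x i` on `(ZMod p)^d`. -/
def linMap (p d : ℕ) (a₀ : ZMod p) (a : Fin d → ZMod p) (x : Fin d → ZMod p) : ZMod p :=
  a₀ + ∑ i, a i * x i

/-- A function is constant on a set. -/
def ConstOn {p d : ℕ} (f : (Fin d → ZMod p) → ZMod p) (S : Set (Fin d → ZMod p)) : Prop :=
  ∀ x ∈ S, ∀ y ∈ S, f x = f y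

/-- A finite set `X ⊆ (ZMod p)^d` is `(K, δ)`-thick along the linear function `x ↦ a₀ + ∑ aᵢxᵢ`:
at least `δ|X|` of its elements lie outside `H(ξ, K)`. -/
def IsThickAlong {p d : ℕ} (X : Finset (Fin d → ZMod p)) (a₀ : ZMod p)
    (a : Fin d → ZMod p) (K : ℕ) (δ : ℝ) : Prop :=
  δ * (X.card : ℝ) ≤ ((X.filter (fun x => linMap p d a₀ a x ∉ interval p K)).card : ℝ)

/-- Multiset version of `IsThickAlong`, cardinalities counted with multiplicity.  -/
def IsThickAlongM {p d : ℕ} (A : Multiset (Fin d → ZMod p)) (a₀ : ZMod p)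
    (a : Fin d → ZMod p) (K : ℕ) (δ : ℝ) : Prop :=
  δ * (Multiset.card A : ℝ) ≤
    (Multiset.card (A.filter (fun x => linMap p d a₀ a x ∉ interval p K)) : ℝ)

/-- A finite set is `(K, δ)`-thick in its affine hull: it is `(K, δ)`-thick along every
linear function which is not constant on the affine hull of `X`. -/
def IsThickInHull {p d : ℕ} (X : Finset (Fin d → ZMod p)) (K : ℕ) (δ : ℝ) : Prop :=
  ∀ (a₀ : ZMod p) (a : Fin d → ZMod p),
    ¬ ConstOn (linMap p d a₀ a)
        ((affineSpan (ZMod p) (X : Set (Fin d → ZMod p)) : AffineSubspace (ZMod p) (Fin d → ZMod p)) : Set (Fin d → ZMod p)) →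
    IsThickAlong X a₀ a K δ

/-- Multiset version of `IsThickInHull` (the affine hull of the support). -/
def IsThickInHullM {p d : ℕ} (X : Multiset (Fin d → ZMod p)) (K : ℕ) (δ : ℝ) : Prop :=
  ∀ (a₀ : ZMod p) (a : Fin d → ZMod p),
    ¬ ConstOn (linMap p d a₀ a)
        ((affineSpan (ZMod p) (↑X.toFinset : Set (Fin d → ZMod p)) : AffineSubspace (ZMod p) (Fin d → ZMod p)) : Set (Fin d → ZMod p)) →
    IsThickAlongM X a₀ a K δ

/-- A set `X ⊆ (ZMod p)^d` is `(K, K', δ)`-tubular: there are `l ∈ {0,…,d}` and an affine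
isomorphism `ψ` such that `ψX ⊆ [-K,K]^l × (ZMod p)^{d-l}` and `ψX` is `(K', δ)`-thick along
every linear function which is not constant on `{0} × (ZMod p)^{d-l}`. -/
def IsTubular {p d : ℕ} (X : Finset (Fin d → ZMod p)) (K K' : ℕ) (δ : ℝ) : Prop :=
  ∃ l ≤ d, ∃ ψ : (Fin d → ZMod p) ≃ᵃ[ZMod p] (Fin d → ZMod p),
    (∀ x ∈ X, ∀ i : Fin d, (i : ℕ) < l → ψ x i ∈ interval p K) ∧
    ∀ (a₀ : ZMod p) (a : Fin d → ZMod p),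
      ¬ ConstOn (linMap p d a₀ a) {x : Fin d → ZMod p | ∀ i : Fin d, (i : ℕ) < l → x i = 0} →
      IsThickAlong (X.image (fun x => ψ x)) a₀ a K' δ

theorem interval_mono {p K K' : ℕ} (h : K ≤ K') : interval p K ⊆ interval p K' :=
  Finset.image_subset_image (Finset.Icc_subset_Icc (by omega) (by omega))

theorem linMap_neg_single {p d : ℕ} (i : Fin d) (c : ZMod p) (x : Fin d → ZMod p) :
    linMap p d (-c) (Pi.single i 1) x = x i - c := by
  simp only [linMap, Pi.single_apply, ite_mul, one_mul, zero_mul, Finset.sum_ite_eq',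
    Finset.mem_univ, if_true]
  ring

theorem IsThickAlong.exists_notMem {p d : ℕ} {X : Finset (Fin d → ZMod p)} {a₀ : ZMod p}
    {a : Fin d → ZMod p} {K : ℕ} {δ : ℝ} (h : IsThickAlong X a₀ a K δ) (hX : X.Nonempty)
    (hδ : 0 < δ) : ∃ x ∈ X, linMap p d a₀ a x ∉ interval p K := by
  have hpos : 0 < δ * (X.card : ℝ) := mul_pos hδ (by exact_mod_cast hX.card_pos)
  obtain ⟨x, hx⟩ := Finset.card_pos.mp (by exact_mod_cast hpos.trans_le h)
  exact ⟨x, Finset.mem_filter.mp hx⟩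

theorem IsThickInHull.constOn_of_forall_mem {p d : ℕ} {X : Finset (Fin d → ZMod p)} {K : ℕ}
    {δ : ℝ} (h : IsThickInHull X K δ) (hX : X.Nonempty) (hδ : 0 < δ) {a₀ : ZMod p}
    {a : Fin d → ZMod p} (hmem : ∀ x ∈ X, linMap p d a₀ a x ∈ interval p K) :
    ConstOn (linMap p d a₀ a) (affineSpan (ZMod p) (X : Set (Fin d → ZMod p))) := by
  by_contra hconst
  obtain ⟨x, hx, hnot⟩ := (h a₀ a hconst).exists_notMem hX hδ
  exact hnot (hmem x hx)

theorem projection_constant_general (p : ℕ)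
    (d l K K' : ℕ) (hKK' : K ≤ K')
    (δ : ℝ) (hδ : 0 < δ) (v : Fin d → ZMod p)
    (X : Finset (Fin d → ZMod p)) (hX : X.Nonempty)
    (hbox : ∀ x ∈ X, ∀ i : Fin d, (i : ℕ) < l → x i - v i ∈ interval p K)
    (hthick : IsThickInHull X K' δ) :
    ∀ i : Fin d, (i : ℕ) < l →
      ∀ x ∈ affineSpan (ZMod p) (X : Set (Fin d → ZMod p)),
        ∀ y ∈ affineSpan (ZMod p) (X : Set (Fin d → ZMod p)), x i = y i := by
  intro i hi x hx y hy
  have hconst : ConstOn (linMap p d (-(v i)) (Pi.single i 1))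
      (affineSpan (ZMod p) (X : Set (Fin d → ZMod p))) :=
    hthick.constOn_of_forall_mem hX hδ fun z hz => by
      rw [linMap_neg_single]
      exact interval_mono hKK' (hbox z hz i hi)
  simpa only [linMap_neg_single, sub_left_inj] using hconst x hx y hy

/-- let `p` be an odd prime, `d ≥ 1`, `l ∈ {0,…,d}`, `0 ≤ K ≤ K'`,
`p > 2K' + 1`, `δ > 0`, `v ∈ 𝔽_p^d`, and let `X ⊆ v + [-K,K]^l × 𝔽_p^{d-l}` be a nonempty
finite set which is `(K', δ)`-thick in its affine hull `U`.  Then each of the first `l`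
coordinate functions is constant on `U`, i.e. the projection of `U` onto the first `l`
coordinates is a single point. -/
theorem projection_constant (p : ℕ) (hp : p.Prime) (hodd : Odd p)
    (d l K K' : ℕ) (hd : 1 ≤ d) (hl : l ≤ d) (hKK' : K ≤ K') (hpK : 2 * K' + 1 < p)
    (δ : ℝ) (hδ : 0 < δ) (v : Fin d → ZMod p)
    (X : Finset (Fin d → ZMod p)) (hX : X.Nonempty)
    (hbox : ∀ x ∈ X, ∀ i : Fin d, (i : ℕ) < l → x i - v i ∈ interval p K)
    (hthick : IsThickInHull X K' δ) :
    ∀ i : Fin d, (i : ℕ) < l →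
      ∀ x ∈ affineSpan (ZMod p) (X : Set (Fin d → ZMod p)),
        ∀ y ∈ affineSpan (ZMod p) (X : Set (Fin d → ZMod p)), x i = y i :=
  projection_constant_general p d l K K' hKK' δ hδ v X hX hbox hthick
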